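/- Every kneading automata group is a self-replicating bounded automata group. Precisely: if G = ⟨Y⟩ ≤ Aut(X*) is a kneading automata group with distinguished generating set Y, then G is a bounded automata group and G is self-replicating. -/

import Mathlib

universe u v

/-- The automorphism group of the rooted tree `X*`: permutations of the free monoid
`List X` that preserve the prefix relation. -/
def treeAut (X : Type u) : Subgroup (Equiv.Perm (List X)) where
  carrier := {g | ∀ a b : List X, a <+: b ↔ g a <+: g b}
  one_mem' := by intro a b; simp
  mul_mem' := by
    intro g h hg hh a b
    simpa [Equiv.Perm.mul_apply] using (hh a b).trans (hg (h a) (h b))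
  inv_mem' := by
    intro g hg a b
    simpa using (hg (g⁻¹ a) (g⁻¹ b)).symm

/-- The section of `g` at the word `w`: the unique automorphism `s` satisfying
`g (w ++ v) = g w ++ s v` for all `v` (with junk value `1` if no such permutation exists). -/
noncomputable def secAt {X : Type u} (g : Equiv.Perm (List X)) (w : List X) :
    Equiv.Perm (List X) :=
  haveI := Classical.propDecidable
  if h : ∃ s : Equiv.Perm (List X), ∀ v : List X, g (w ++ v) = g w ++ s v then h.choose
  else 1

/-- The permutation of `X` induced by `g` on the first level of the tree. -/
noncomputable def perm1 {X : Type u} (g : Equiv.Perm (List X)) : Equiv.Perm X :=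
  haveI := Classical.propDecidable
  if h : ∃ σ : Equiv.Perm X, ∀ x : X, g [x] = [σ x] then h.choose else 1

/-- A permutation of `X`, viewed as a finitary automorphism of `X*` of depth (at most) one. -/
def embed1 {X : Type u} (σ : Equiv.Perm X) : Equiv.Perm (List X) where
  toFun w := match w with
    | [] => []
    | x :: vtl => σ x :: vtl
  invFun w := match w with
    | [] => []
    | x :: vtl => σ⁻¹ x :: vtl
  left_inv := by rintro (_ | ⟨x, vtl⟩) <;> simp
  right_inv := by rintro (_ | ⟨x, vtl⟩) <;> simp

/-- `G` is self-similar: all sections of elements of `G` belong to `G`. -/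
def SelfSimilarSub {X : Type u} (G : Subgroup (Equiv.Perm (List X))) : Prop :=
  ∀ g ∈ G, ∀ w : List X, secAt g w ∈ G

/-- `sec_G(v)`: the image of the pointwise stabilizer of `v` in `G` under the
section homomorphism at `v`. -/
def secImage {X : Type u} (G : Subgroup (Equiv.Perm (List X))) (v : List X) :
    Set (Equiv.Perm (List X)) :=
  {h | ∃ g ∈ G, g v = v ∧ secAt g v = h}

/-- `G` is self-replicating: self-similar, transitive on `X`, and `sec_G(x) = G`
for every `x ∈ X`. -/
def SelfReplicating {X : Type u} (G : Subgroup (Equiv.Perm (List X))) : Prop :=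
  SelfSimilarSub G ∧ (∀ x y : X, ∃ g ∈ G, g [x] = [y]) ∧
    ∀ x : X, secImage G [x] = (G : Set (Equiv.Perm (List X)))

/-- `G` is weakly self-replicating: `sec_G(v) = G` for every word `v`. -/
def WeaklySelfReplicating {X : Type u} (G : Subgroup (Equiv.Perm (List X))) : Prop :=
  ∀ v : List X, secImage G v = (G : Set (Equiv.Perm (List X)))

/-- `g` is finitary: all sections at some level are trivial. -/
def IsFinitary {X : Type u} (g : Equiv.Perm (List X)) : Prop :=
  ∃ k : ℕ, ∀ v : List X, v.length = k → secAt g v = 1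

/-- `g` is directed. -/
def IsDirectedAut {X : Type u} (g : Equiv.Perm (List X)) : Prop :=
  ∃ k : ℕ, 1 ≤ k ∧ ∃ w : List X, w.length = k ∧ secAt g w = g ∧
    ∀ v : List X, v.length = k → v ≠ w → IsFinitary (secAt g v)

/-- `g` has bounded activity. -/
def IsBoundedAut {X : Type u} (g : Equiv.Perm (List X)) : Prop :=
  ∃ N : ℕ, ∀ n : ℕ, 1 ≤ n →
    Set.ncard {v : List X | v.length = n ∧ secAt g v ≠ 1} ≤ N

/-- `g` is finite state. -/
def IsFiniteState {X : Type u} (g : Equiv.Perm (List X)) : Prop :=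
  (Set.range fun v : List X => secAt g v).Finite

/-- A bounded automata group: a finitely generated self-similar group of tree
automorphisms, all of whose elements are bounded and finite state. -/
def BoundedAutomataGroup {X : Type u} (G : Subgroup (Equiv.Perm (List X))) : Prop :=
  G ≤ treeAut X ∧ G.FG ∧ SelfSimilarSub G ∧
    ∀ g ∈ G, IsBoundedAut g ∧ IsFiniteState g

/-- An odometer: `⟨d⟩` is transitive on `X` and `d` has exactly one nontrivial
first-level section, which equals `d`. -/
def IsOdometer {X : Type u} (d : Equiv.Perm (List X)) : Prop :=
  (∀ x y : X, ∃ n : ℤ, (d ^ n) [x] = [y]) ∧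
  (∀ x : X, secAt d [x] = 1 ∨ secAt d [x] = d) ∧
  ∃! x : X, secAt d [x] = d

/-- A generalized basilica group, with distinguished generating set `Y`. -/
def GenBasilica {X : Type u} (G : Subgroup (Equiv.Perm (List X)))
    (Y : Set (Equiv.Perm (List X))) : Prop :=
  G ≤ treeAut X ∧ Y.Finite ∧ Subgroup.closure Y = G ∧
    ∀ g ∈ Y, (∀ x : X, secAt g [x] = 1) ∨
      ((∀ x : X, secAt g [x] = 1 ∨ secAt g [x] = g) ∧ ∃! x : X, secAt g [x] = g)

/-- The generating set `Y` is balanced: for each directed `g ∈ Y` with active vertex `x`,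
the least `n ≥ 1` such that `g ^ n` fixes `x` also satisfies that `g ^ n` fixes `X`
pointwise. -/
def BalancedSet {X : Type u} (Y : Set (Equiv.Perm (List X))) : Prop :=
  ∀ g ∈ Y, IsDirectedAut g → ∀ x : X, secAt g [x] = g →
    ∀ n : ℕ, 1 ≤ n → (g ^ n) [x] = [x] →
      (∀ m : ℕ, 1 ≤ m → m < n → (g ^ m) [x] ≠ [x]) →
      ∀ y : X, (g ^ n) [y] = [y]

/-- A bounded automata group in reduced form, with distinguished generating set `Y`. -/
def ReducedForm {X : Type u} (G : Subgroup (Equiv.Perm (List X)))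
    (Y : Set (Equiv.Perm (List X))) : Prop :=
  Y.Finite ∧ Subgroup.closure Y = G ∧
    ∀ g ∈ Y, (∀ x : X, secAt g [x] = 1) ∨
      ((∀ x : X, secAt g [x] = g ∨ ∃ h ∈ G, secAt g [x] = embed1 (perm1 h)) ∧
        ∃! x : X, secAt g [x] = g)

/-- A group of abelian wreath type, with distinguished (self-similar) generating set `Y`. -/
def AbelianWreathType {X : Type u} (G : Subgroup (Equiv.Perm (List X)))
    (Y : Set (Equiv.Perm (List X))) : Prop :=
  G ≤ treeAut X ∧
  (∀ g ∈ G, ∀ h ∈ G, perm1 g * perm1 h = perm1 h * perm1 g) ∧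
  Y.Finite ∧ Subgroup.closure Y = G ∧
  (∀ g ∈ Y, ∀ x : X, secAt g [x] ∈ Y) ∧
  ∀ g ∈ Y, (∀ x : X, secAt g [x] = 1) ∨
    ((∀ x : X, secAt g [x] = g ∨ ∃ h ∈ G, secAt g [x] = embed1 (perm1 h)) ∧
      ∃! x : X, secAt g [x] = g)

/-- The setoid on `X` whose classes are the orbits of `⟨σ⟩`, i.e. the cycles (including
length-one cycles) in the complete cycle decomposition of `σ`. -/
def cycleSetoid {X : Type u} (σ : Equiv.Perm X) : Setoid X where
  r x y := ∃ n : ℤ, (σ ^ n) x = y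
  iseqv := by
    constructor
    · exact fun x => ⟨0, by simp⟩
    · rintro x y ⟨n, rfl⟩
      exact ⟨-n, by rw [← Equiv.Perm.mul_apply, ← zpow_add, neg_add_cancel, zpow_zero,
        Equiv.Perm.one_apply]⟩
    · rintro x y z ⟨n, rfl⟩ ⟨m, rfl⟩
      exact ⟨m + n, by rw [← Equiv.Perm.mul_apply, ← zpow_add]⟩

/-- The vertex set of the cycle graph of a sequence of permutations: elements of `X`
together with the cycles of the permutations. -/
def CycleVertex {X : Type u} {ι : Type v} (σ : ι → Equiv.Perm X) : Type (max u v) :=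
  X ⊕ Σ i : ι, Quotient (cycleSetoid (σ i))

/-- The cycle graph of a sequence of permutations of `X`: a bipartite graph on
`X ⊔ {cycles}`, with an edge between `x ∈ X` and a cycle whenever `x` appears in it. -/
def cycleGraph {X : Type u} {ι : Type v} (σ : ι → Equiv.Perm X) :
    SimpleGraph (CycleVertex σ) where
  Adj a b := ∃ (x : X) (p : Σ i : ι, Quotient (cycleSetoid (σ i))),
      Quotient.mk (cycleSetoid (σ p.1)) x = p.2 ∧
      ((a = Sum.inl x ∧ b = Sum.inr p) ∨ (a = Sum.inr p ∧ b = Sum.inl x))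
  symm := by
    exact ⟨by rintro a b ⟨x, p, hx, h | h⟩ <;> exact ⟨x, p, hx, by tauto⟩⟩
  loopless := by
    exact ⟨by rintro a ⟨x, p, hx, ⟨h1, h2⟩ | ⟨h1, h2⟩⟩ <;> simp_all⟩

/-- A sequence of permutations of `X` is tree-like if its cycle graph is a tree. -/
def TreeLike {X : Type u} {ι : Type v} (σ : ι → Equiv.Perm X) : Prop :=
  (cycleGraph σ).IsTree

/-- A kneading automata group, with distinguished generating set `Y`. -/
def Kneading {X : Type u} (G : Subgroup (Equiv.Perm (List X)))
    (Y : Set (Equiv.Perm (List X))) : Prop :=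
  G ≤ treeAut X ∧ Y.Finite ∧ Subgroup.closure Y = G ∧
  (∀ g ∈ Y, ∀ x : X, secAt g [x] ∈ Y) ∧
  (∀ h ∈ Y, h ≠ 1 → ∃! p : Equiv.Perm (List X) × X, p.1 ∈ Y ∧ secAt p.1 [p.2] = h) ∧
  (∀ h ∈ Y, ∀ x y : X, (∃ n : ℤ, ((perm1 h) ^ n) x = y) →
      secAt h [x] ≠ 1 → secAt h [y] ≠ 1 → x = y) ∧
  TreeLike (fun h : {h : Equiv.Perm (List X) // h ∈ Y ∧ h ≠ 1} => perm1 h.1)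

/-- A group is virtually abelian if it has an abelian subgroup of finite index. -/
def VirtuallyAbelian (G : Type u) [Group G] : Prop :=
  ∃ H : Subgroup G, H.FiniteIndex ∧ ∀ a b : ↥H, a * b = b * a

/-- A group is locally finite if all of its finitely generated subgroups are finite. -/
def LocallyFiniteGroup (G : Type u) [Group G] : Prop :=
  ∀ H : Subgroup G, H.FG → Finite ↥H

/-- The class of elementary amenable groups: the smallest class of groups containing all
finite groups and all abelian groups and closed under subgroups (equivalently, injective
homomorphisms), quotients (equivalently, surjective homomorphisms), group extensions and
directed unions. -/
inductive ElementaryAmenable : ∀ (G : Type u) [inst : Group G], Prop where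
  | of_finite (G : Type u) [Group G] (h : Finite G) : ElementaryAmenable G
  | of_comm (G : Type u) [Group G] (h : ∀ a b : G, a * b = b * a) : ElementaryAmenable G
  | of_injective (G H : Type u) [Group G] [Group H] (f : G →* H)
      (hf : Function.Injective f) (hH : ElementaryAmenable H) : ElementaryAmenable G
  | of_surjective (G H : Type u) [Group G] [Group H] (f : G →* H)
      (hf : Function.Surjective f) (hG : ElementaryAmenable G) : ElementaryAmenable H
  | of_extension (G : Type u) [Group G] (N : Subgroup G) [N.Normal]
      (hN : ElementaryAmenable ↥N) (hQ : ElementaryAmenable (G ⧸ N)) :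
      ElementaryAmenable G
  | of_directedUnion (G : Type u) [Group G] (ι : Type u) (H : ι → Subgroup G)
      (hdir : Directed (· ≤ ·) H) (hsup : (⨆ i, H i) = ⊤)
      (h : ∀ i, ElementaryAmenable ↥(H i)) : ElementaryAmenable G

/-- The ordinal-indexed hierarchy of elementary amenable groups: `EG₀` consists of the
groups that are finite or abelian (closed under isomorphism); `EG_{α+1}` consists of the
`EG_α`-by-`EG₀` groups together with the directed unions of `EG_α` groups; and
`EG_λ = ⋃_{β<λ} EG_β` for `λ` a limit. -/
inductive InEG : Ordinal.{u} → ∀ (G : Type u) [inst : Group G], Prop where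
  | base (G : Type u) [Group G] (h : Finite G ∨ ∀ a b : G, a * b = b * a) : InEG 0 G
  | iso (α : Ordinal.{u}) (G H : Type u) [Group G] [Group H] (e : G ≃* H)
      (h : InEG α G) : InEG α H
  | succ_ext (α : Ordinal.{u}) (G : Type u) [Group G] (N : Subgroup G) [N.Normal]
      (hN : InEG α ↥N)
      (hQ : Finite (G ⧸ N) ∨ ∀ a b : G ⧸ N, a * b = b * a) : InEG (α + 1) G
  | succ_lim (α : Ordinal.{u}) (G : Type u) [Group G] (ι : Type u) (H : ι → Subgroup G)
      (hdir : Directed (· ≤ ·) H) (hsup : (⨆ i, H i) = ⊤)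
      (h : ∀ i, InEG α ↥(H i)) : InEG (α + 1) G
  | limit (α β : Ordinal.{u}) (G : Type u) [Group G] (hα : Order.IsSuccLimit α) (hβ : β < α)
      (h : InEG β G) : InEG α G

/-- The construction rank of an elementary amenable group: the least ordinal `α` with
`G ∈ EG_α`. -/
noncomputable def egRank (G : Type u) [Group G] : Ordinal.{u} :=
  sInf {α : Ordinal.{u} | InEG α G}

/-- `M` is a normal subgroup of `H` (both viewed inside a common ambient group). -/
def NormalIn {G : Type u} [Group G] (M H : Subgroup G) : Prop :=
  M ≤ H ∧ ∀ h ∈ H, ∀ m ∈ M, h * m * h⁻¹ ∈ M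

/-- The verbal subgroup of the subgroup `H` given by the word `γ`, viewed inside the
ambient group. -/
def verbalIn {G : Type u} [Group G] {n : ℕ} (γ : FreeGroup (Fin n)) (H : Subgroup G) :
    Subgroup G :=
  Subgroup.closure {g | ∃ f : Fin n → G, (∀ i, f i ∈ H) ∧ FreeGroup.lift f γ = g}

/-! The nontrivial sections of a kneading generator are again generators, and each nontrivial
generator has a unique parent, so a nontrivial section of a generator determines the word it is
taken at: on every level the active words of a generator inject into `Y`, which makes the
generators, hence all of `G`, bounded and finite state.

If a generator `g` is active at `x`, then `x` is the only active letter of its `π₁(g)`-cycle, so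
the first power of `g` returning to `x` has section `g_x` at `x`; thus `g_x ∈ sec_G(x)`, and
conjugating by `g` gives `sec_G(x) = sec_G(π₁(g) x)`. The cycle graph being connected, all the
groups `sec_G(x)` coincide and `G` is transitive on `X`; finally every nontrivial generator is a
section `g_z` of a generator, so it lies in `sec_G(z) = sec_G(x)`. -/

open Equiv

namespace TreeAut

variable {X : Type u} {g h : Perm (List X)}

theorem apply_nil (hg : g ∈ treeAut X) : g [] = [] := by
  have : g⁻¹ [] = [] := List.eq_nil_of_prefix_nil ((hg (g⁻¹ []) []).mpr (by simp))
  simpa using (congrArg g this).symm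

def prefixEquivFin (w : List X) : {a : List X // a <+: w} ≃ Fin (w.length + 1) where
  toFun a := ⟨a.1.length, Nat.lt_succ_of_le a.2.length_le⟩
  invFun i := ⟨w.take i, List.take_prefix _ _⟩
  left_inv a := Subtype.ext (List.prefix_iff_eq_take.mp a.2).symm
  right_inv i := by ext; simp only [List.length_take]; omega

theorem length_apply (hg : g ∈ treeAut X) (w : List X) : (g w).length = w.length := by
  have e : {a : List X // a <+: w} ≃ {b : List X // b <+: g w} :=
    { toFun := fun a => ⟨g a, (hg a w).mp a.2⟩
      invFun := fun b => ⟨g⁻¹ b, (hg (g⁻¹ b) w).mpr (by simpa using b.2)⟩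
      left_inv := fun a => by ext1; simp
      right_inv := fun b => by ext1; simp }
  have := Fin.equiv_iff_eq.mp ⟨((prefixEquivFin w).symm.trans e).trans (prefixEquivFin (g w))⟩
  omega

theorem apply_append_eq_append_drop (hg : g ∈ treeAut X) (w v : List X) :
    g (w ++ v) = g w ++ (g (w ++ v)).drop w.length := by
  obtain ⟨t, ht⟩ := (hg w (w ++ v)).mp (List.prefix_append w v)
  rw [← ht, ← length_apply hg w, List.drop_left]

theorem exists_section (hg : g ∈ treeAut X) (w : List X) :
    ∃ s : Perm (List X), ∀ v, g (w ++ v) = g w ++ s v := by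
  have hlen := length_apply hg w
  refine ⟨⟨fun v => (g (w ++ v)).drop w.length,
    fun v => (g⁻¹ (g w ++ v)).drop w.length, fun v => ?_, fun v => ?_⟩,
    apply_append_eq_append_drop hg w⟩
  · simp only
    rw [← apply_append_eq_append_drop hg, Perm.coe_inv, symm_apply_apply, List.drop_left]
  · have h := apply_append_eq_append_drop ((treeAut X).inv_mem hg) (g w) v
    rw [Perm.coe_inv, symm_apply_apply, hlen] at h
    simp only [Perm.coe_inv]
    rw [← h, apply_symm_apply, ← hlen, List.drop_left]

theorem apply_append (hg : g ∈ treeAut X) (w v : List X) :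
    g (w ++ v) = g w ++ secAt g w v := by
  have hex := exists_section hg w
  rw [secAt, dif_pos hex]
  exact hex.choose_spec v

theorem secAt_eq_of_forall (hg : g ∈ treeAut X) {w : List X} {s : Perm (List X)}
    (hs : ∀ v, g (w ++ v) = g w ++ s v) : secAt g w = s :=
  Perm.ext fun v => List.append_cancel_left ((apply_append hg w v).symm.trans (hs v))

theorem secAt_mem (hg : g ∈ treeAut X) (w : List X) : secAt g w ∈ treeAut X := by
  intro a b
  calc a <+: b ↔ w ++ a <+: w ++ b := (List.prefix_append_right_inj w).symm
    _ ↔ g (w ++ a) <+: g (w ++ b) := hg _ _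
    _ ↔ _ := by rw [apply_append hg, apply_append hg, List.prefix_append_right_inj]

theorem secAt_one (w : List X) : secAt (1 : Perm (List X)) w = 1 :=
  secAt_eq_of_forall (treeAut X).one_mem fun _ => rfl

theorem secAt_nil (hg : g ∈ treeAut X) : secAt g [] = g :=
  secAt_eq_of_forall hg fun v => by simp [apply_nil hg]

theorem secAt_mul (hg : g ∈ treeAut X) (hh : h ∈ treeAut X) (w : List X) :
    secAt (g * h) w = secAt g (h w) * secAt h w :=
  secAt_eq_of_forall ((treeAut X).mul_mem hg hh) fun v => by
    simp only [Perm.mul_apply]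
    rw [apply_append hh, apply_append hg]

theorem secAt_inv (hg : g ∈ treeAut X) (w : List X) :
    secAt g⁻¹ w = (secAt g (g⁻¹ w))⁻¹ := by
  have h := secAt_mul hg ((treeAut X).inv_mem hg) w
  rw [mul_inv_cancel, secAt_one] at h
  exact eq_inv_of_mul_eq_one_right h.symm

theorem secAt_append (hg : g ∈ treeAut X) (w u : List X) :
    secAt g (w ++ u) = secAt (secAt g w) u :=
  secAt_eq_of_forall hg fun v => by
    rw [List.append_assoc, apply_append hg w, apply_append (secAt_mem hg w),
      apply_append hg w u, List.append_assoc]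

theorem secAt_cons (hg : g ∈ treeAut X) (x : X) (w : List X) :
    secAt g (x :: w) = secAt (secAt g [x]) w :=
  secAt_append hg [x] w

theorem apply_singleton (hg : g ∈ treeAut X) (x : X) : g [x] = [perm1 g x] := by
  have hex : ∃ σ : Perm X, ∀ x, g [x] = [σ x] := by
    have hsingle : ∀ k ∈ treeAut X, ∀ x : X, ∃ y, k [x] = [y] :=
      fun k hk x => List.length_eq_one_iff.mp (length_apply hk [x])
    choose f hf using hsingle g hg
    choose f' hf' using hsingle g⁻¹ ((treeAut X).inv_mem hg)
    refine ⟨⟨f, f', fun x => ?_, fun x => ?_⟩, hf⟩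
    · simpa [← hf, eq_comm] using hf' (f x)
    · simpa [← hf', eq_comm] using hf (f' x)
  rw [perm1, dif_pos hex]
  exact hex.choose_spec x

theorem pow_apply_singleton (hg : g ∈ treeAut X) (n : ℕ) (x : X) :
    (g ^ n) [x] = [(perm1 g ^ n) x] := by
  induction n generalizing x with
  | zero => rfl
  | succ n ih => rw [pow_succ, Perm.mul_apply, apply_singleton hg, ih, pow_succ, Perm.mul_apply]

end TreeAut

section Sections

open TreeAut

variable {X : Type u} {G : Subgroup (Perm (List X))} {g : Perm (List X)}

theorem secAt_pow_eq_one (hg : g ∈ treeAut X) {n : ℕ} {x : X}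
    (h : ∀ i < n, secAt g [(perm1 g ^ i) x] = 1) : secAt (g ^ n) [x] = 1 := by
  induction n with
  | zero => exact secAt_one [x]
  | succ n ih =>
    rw [pow_succ', secAt_mul hg ((treeAut X).pow_mem hg n), pow_apply_singleton hg,
      h n n.lt_succ_self, ih fun i hi => h i (hi.trans n.lt_succ_self), one_mul]

theorem secAt_pow_succ_eq_secAt (hg : g ∈ treeAut X) {n : ℕ} {x : X}
    (h : ∀ i, 0 < i → i ≤ n → secAt g [(perm1 g ^ i) x] = 1) :
    secAt (g ^ (n + 1)) [x] = secAt g [x] := by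
  rw [pow_succ, secAt_mul ((treeAut X).pow_mem hg n) hg, apply_singleton hg,
    secAt_pow_eq_one hg fun i hi => ?_, one_mul]
  rw [← Perm.mul_apply, ← pow_succ]
  exact h (i + 1) i.succ_pos hi

def secImageSubgroup (hG : G ≤ treeAut X) (v : List X) : Subgroup (Perm (List X)) where
  carrier := secImage G v
  one_mem' := ⟨1, G.one_mem, rfl, secAt_one v⟩
  mul_mem' := by
    rintro _ _ ⟨a, ha, hav, rfl⟩ ⟨b, hb, hbv, rfl⟩
    refine ⟨a * b, G.mul_mem ha hb, by rw [Perm.mul_apply, hbv, hav], ?_⟩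
    rw [secAt_mul (hG ha) (hG hb), hbv]
  inv_mem' := by
    rintro _ ⟨a, ha, hav, rfl⟩
    have hav' : a⁻¹ v = v := by rw [Perm.inv_eq_iff_eq, hav]
    exact ⟨a⁻¹, G.inv_mem ha, hav', by rw [secAt_inv (hG ha), hav']⟩

@[simp]
theorem mem_secImageSubgroup {hG : G ≤ treeAut X} {v : List X} {a : Perm (List X)} :
    a ∈ secImageSubgroup hG v ↔ a ∈ secImage G v :=
  Iff.rfl

theorem secAt_mem_secImage_of_sameCycle [Finite X] (hG : G ≤ treeAut X) (hg : g ∈ G)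
    {x : X} (h : ∀ y, (perm1 g).SameCycle x y → y ≠ x → secAt g [y] = 1) :
    secAt g [x] ∈ secImage G [x] := by
  have hper : Function.IsPeriodicPt (perm1 g) (orderOf (perm1 g)) x := by
    rw [Function.IsPeriodicPt, Function.IsFixedPt, Perm.iterate_eq_pow, pow_orderOf_eq_one]
    rfl
  obtain ⟨n, hn⟩ := Nat.exists_eq_add_one_of_ne_zero (hper.minimalPeriod_pos (orderOf_pos _)).ne'
  refine ⟨g ^ (n + 1), G.pow_mem hg _, ?_, secAt_pow_succ_eq_secAt (hG hg) fun i hi hin => ?_⟩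
  · rw [pow_apply_singleton (hG hg), ← hn, ← Perm.iterate_eq_pow, Function.iterate_minimalPeriod]
  · refine h _ (Perm.sameCycle_pow_right.mpr (Perm.SameCycle.refl _ _)) fun hfix => ?_
    exact Function.not_isPeriodicPt_of_pos_of_lt_minimalPeriod hi.ne' (by omega) hfix

theorem inv_mul_mul_secAt_mem_secImage (hG : G ≤ treeAut X) {t : Perm (List X)} (ht : t ∈ G)
    {v w : List X} (htv : t v = w) {a : Perm (List X)} (ha : a ∈ secImage G w) :
    (secAt t v)⁻¹ * a * secAt t v ∈ secImage G v := by
  obtain ⟨g, hg, hgw, rfl⟩ := ha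
  have htw : t⁻¹ w = v := by rw [Perm.inv_eq_iff_eq, htv]
  refine ⟨t⁻¹ * g * t, G.mul_mem (G.mul_mem (G.inv_mem ht) hg) ht, ?_, ?_⟩
  · simp only [Perm.mul_apply, htv, hgw, htw]
  · have ht' := hG ht
    rw [secAt_mul ((treeAut X).mul_mem ((treeAut X).inv_mem ht') (hG hg)) ht',
      secAt_mul ((treeAut X).inv_mem ht') (hG hg), htv, hgw, secAt_inv ht', htw]

theorem secImage_eq_of_secAt_mem (hG : G ≤ treeAut X) {t : Perm (List X)} (ht : t ∈ G)
    {v w : List X} (htv : t v = w) (hs : secAt t v ∈ secImage G v) :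
    secImage G v = secImage G w := by
  have hs' := (secImageSubgroup hG v).inv_mem hs
  apply Set.Subset.antisymm
  · intro a ha
    have htw : t⁻¹ w = v := by rw [Perm.inv_eq_iff_eq, htv]
    have hconj := inv_mul_mul_secAt_mem_secImage hG (G.inv_mem ht) htw
      ((secImageSubgroup hG v).mul_mem ((secImageSubgroup hG v).mul_mem hs' ha) hs)
    simpa [secAt_inv (hG ht), htw, mul_assoc] using hconj
  · intro a ha
    have hconj := inv_mul_mul_secAt_mem_secImage hG ht htv ha
    simpa [mul_assoc] using
      (secImageSubgroup hG v).mul_mem ((secImageSubgroup hG v).mul_mem hs hconj) hs'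

def secImageSetoid (G : Subgroup (Perm (List X))) : Setoid X where
  r x y := (∃ t ∈ G, t [x] = [y]) ∧ secImage G [x] = secImage G [y]
  iseqv := by
    refine ⟨fun x => ⟨⟨1, G.one_mem, rfl⟩, rfl⟩, ?_, ?_⟩
    · rintro x y ⟨⟨t, ht, htxy⟩, hxy⟩
      exact ⟨⟨t⁻¹, G.inv_mem ht, by rw [Perm.inv_eq_iff_eq, htxy]⟩, hxy.symm⟩
    · rintro x y z ⟨⟨s, hs, hsxy⟩, hxy⟩ ⟨⟨t, ht, htyz⟩, hyz⟩
      exact ⟨⟨t * s, G.mul_mem ht hs, by rw [Perm.mul_apply, hsxy, htyz]⟩, hxy.trans hyz⟩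

end Sections

section CycleGraph

variable {X : Type u} {ι : Type v}

theorem cycleSetoid_le {σ : Perm X} {r : Setoid X} (hr : ∀ x, r x (σ x)) :
    cycleSetoid σ ≤ r := by
  rintro x _ ⟨n, rfl⟩
  induction n using Int.induction_on generalizing x with
  | zero => exact r.refl x
  | succ n ih => rw [zpow_add_one, Perm.mul_apply]; exact r.trans (hr x) (@ih (σ x))
  | pred n ih =>
    rw [zpow_sub_one, Perm.mul_apply]
    refine r.trans (r.symm ?_) (@ih (σ⁻¹ x))
    simpa using hr (σ⁻¹ x)

theorem Setoid.rel_of_preconnected_cycleGraph {σ : ι → Perm X}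
    (hσ : (cycleGraph σ).Preconnected) {r : Setoid X} (hr : ∀ i x, r x (σ i x)) (x y : X) :
    r x y := by
  let f : CycleVertex σ → Quotient r :=
    Sum.elim (Quotient.mk r) fun p => Quotient.map' id (cycleSetoid_le (hr p.1)) p.2
  have hadj : ∀ a b, (cycleGraph σ).Adj a b → f a = f b := by
    rintro a b ⟨z, p, hzp, ⟨rfl, rfl⟩ | ⟨rfl, rfl⟩⟩ <;> simp [f, ← hzp]
  have hconst : ∀ b, Relation.ReflTransGen (cycleGraph σ).Adj (.inl x) b → f (.inl x) = f b := by
    intro b hb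
    induction hb with
    | refl => rfl
    | tail _ hab ih => exact ih.trans (hadj _ _ hab)
  exact Quotient.exact <|
    hconst _ ((SimpleGraph.reachable_iff_reflTransGen _ _).mp (hσ (.inl x) (.inl y)))

end CycleGraph

section Subgroups

open TreeAut

variable {X : Type u} {Y : Set (Perm (List X))}

def sectionsIn (K : Subgroup (Perm (List X))) : Subgroup (Perm (List X)) where
  carrier := {g | g ∈ treeAut X ∧ ∀ w, secAt g w ∈ K}
  one_mem' := ⟨(treeAut X).one_mem, fun w => by rw [secAt_one]; exact K.one_mem⟩
  mul_mem' := fun ⟨ha, hsa⟩ ⟨hb, hsb⟩ => ⟨(treeAut X).mul_mem ha hb, fun w => by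
    rw [secAt_mul ha hb]; exact K.mul_mem (hsa _) (hsb _)⟩
  inv_mem' := fun ⟨ha, hsa⟩ => ⟨(treeAut X).inv_mem ha, fun w => by
    rw [secAt_inv ha]; exact K.inv_mem (hsa _)⟩

def finiteStateTreeAut (X : Type u) : Subgroup (Perm (List X)) where
  carrier := {g | g ∈ treeAut X ∧ IsFiniteState g}
  one_mem' := ⟨(treeAut X).one_mem, (Set.finite_singleton 1).subset <| by
    rintro _ ⟨w, rfl⟩; exact secAt_one w⟩
  mul_mem' := fun {a b} ⟨ha, hfa⟩ ⟨hb, hfb⟩ => ⟨(treeAut X).mul_mem ha hb,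
    (hfa.image2 (· * ·) hfb).subset <| by
      rintro _ ⟨w, rfl⟩
      exact ⟨_, ⟨b w, rfl⟩, _, ⟨w, rfl⟩, (secAt_mul ha hb w).symm⟩⟩
  inv_mem' := fun {a} ⟨ha, hfa⟩ => ⟨(treeAut X).inv_mem ha, (hfa.image (·⁻¹)).subset <| by
      rintro _ ⟨w, rfl⟩
      exact ⟨_, ⟨a⁻¹ w, rfl⟩, (secAt_inv ha w).symm⟩⟩

theorem ncard_secAt_mul_ne_one_le [Finite X] {a b : Perm (List X)} (ha : a ∈ treeAut X)
    (hb : b ∈ treeAut X) (n : ℕ) :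
    {v : List X | v.length = n ∧ secAt (a * b) v ≠ 1}.ncard ≤
      {v : List X | v.length = n ∧ secAt a v ≠ 1}.ncard +
        {v : List X | v.length = n ∧ secAt b v ≠ 1}.ncard := by
  set Sa := {v : List X | v.length = n ∧ secAt a v ≠ 1}
  set Sb := {v : List X | v.length = n ∧ secAt b v ≠ 1}
  have hfin : ∀ S : Set (List X), S ⊆ {v | v.length = n} → S.Finite :=
    fun S hS => (List.finite_length_eq X n).subset hS
  have hsub : {v : List X | v.length = n ∧ secAt (a * b) v ≠ 1} ⊆ b.symm '' Sa ∪ Sb := by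
    rintro v ⟨hv, hne⟩
    rw [secAt_mul ha hb] at hne
    by_cases hbv : secAt b v = 1
    · rw [hbv, mul_one] at hne
      exact .inl ⟨b v, ⟨by rw [length_apply hb, hv], hne⟩, by simp⟩
    · exact .inr ⟨hv, hbv⟩
  calc _ ≤ (b.symm '' Sa ∪ Sb).ncard :=
        Set.ncard_le_ncard hsub (((hfin Sa fun _ h => h.1).image _).union (hfin Sb fun _ h => h.1))
    _ ≤ (b.symm '' Sa).ncard + Sb.ncard := Set.ncard_union_le _ _
    _ = Sa.ncard + Sb.ncard := by rw [Set.ncard_image_of_injective _ b.symm.injective]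

theorem ncard_secAt_inv_ne_one_le [Finite X] {a : Perm (List X)} (ha : a ∈ treeAut X)
    (n : ℕ) :
    {v : List X | v.length = n ∧ secAt a⁻¹ v ≠ 1}.ncard ≤
      {v : List X | v.length = n ∧ secAt a v ≠ 1}.ncard := by
  have hsub : {v : List X | v.length = n ∧ secAt a⁻¹ v ≠ 1} ⊆
      a '' {v : List X | v.length = n ∧ secAt a v ≠ 1} := by
    rintro v ⟨hv, hne⟩
    rw [secAt_inv ha, Ne, inv_eq_one] at hne
    exact ⟨a⁻¹ v, ⟨by rw [length_apply ((treeAut X).inv_mem ha), hv], hne⟩, by simp⟩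
  calc _ ≤ (a '' {v : List X | v.length = n ∧ secAt a v ≠ 1}).ncard :=
        Set.ncard_le_ncard hsub (((List.finite_length_eq X n).subset fun _ h => h.1).image _)
    _ = _ := Set.ncard_image_of_injective _ a.injective

def boundedTreeAut (X : Type u) [Finite X] : Subgroup (Perm (List X)) where
  carrier := {g | g ∈ treeAut X ∧ IsBoundedAut g}
  one_mem' := ⟨(treeAut X).one_mem, 0, fun n _ => by simp [secAt_one]⟩
  mul_mem' := fun ⟨ha, Na, hNa⟩ ⟨hb, Nb, hNb⟩ => ⟨(treeAut X).mul_mem ha hb, Na + Nb,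
    fun n hn => (ncard_secAt_mul_ne_one_le ha hb n).trans (add_le_add (hNa n hn) (hNb n hn))⟩
  inv_mem' := fun ⟨ha, Na, hNa⟩ => ⟨(treeAut X).inv_mem ha, Na,
    fun n hn => (ncard_secAt_inv_ne_one_le ha n).trans (hNa n hn)⟩

theorem secAt_mem_of_secAt_singleton_mem (hY : Y ⊆ treeAut X)
    (hsec : ∀ g ∈ Y, ∀ x, secAt g [x] ∈ Y) {g : Perm (List X)} (hg : g ∈ Y) (w : List X) :
    secAt g w ∈ Y := by
  induction w generalizing g with
  | nil => rwa [secAt_nil (hY hg)]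
  | cons x w ih => rw [secAt_cons (hY hg)]; exact ih (hsec g hg x)

theorem selfSimilarSub_closure (hY : Y ⊆ treeAut X) (hsec : ∀ g ∈ Y, ∀ x, secAt g [x] ∈ Y) :
    SelfSimilarSub (Subgroup.closure Y) := by
  have hle : Subgroup.closure Y ≤ sectionsIn (Subgroup.closure Y) :=
    (Subgroup.closure_le _).mpr fun g hg => ⟨hY hg, fun w =>
      Subgroup.subset_closure (secAt_mem_of_secAt_singleton_mem hY hsec hg w)⟩
  exact fun g hg => (hle hg).2

end Subgroups

namespace Kneading

open TreeAut

variable {X : Type u} {G : Subgroup (Perm (List X))} {Y : Set (Perm (List X))}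

theorem le_treeAut (hK : Kneading G Y) : G ≤ treeAut X := hK.1

theorem finite (hK : Kneading G Y) : Y.Finite := hK.2.1

theorem closure_eq (hK : Kneading G Y) : Subgroup.closure Y = G := hK.2.2.1

theorem secAt_singleton_mem (hK : Kneading G Y) {g : Perm (List X)} (hg : g ∈ Y) (x : X) :
    secAt g [x] ∈ Y :=
  hK.2.2.2.1 g hg x

theorem existsUnique_parent (hK : Kneading G Y) {h : Perm (List X)} (hh : h ∈ Y) (h1 : h ≠ 1) :
    ∃! p : Perm (List X) × X, p.1 ∈ Y ∧ secAt p.1 [p.2] = h :=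
  hK.2.2.2.2.1 h hh h1

theorem eq_of_sameCycle (hK : Kneading G Y) {h : Perm (List X)} (hh : h ∈ Y) {x y : X}
    (hxy : (perm1 h).SameCycle x y) (hx : secAt h [x] ≠ 1) (hy : secAt h [y] ≠ 1) : x = y :=
  hK.2.2.2.2.2.1 h hh x y hxy hx hy

theorem preconnected (hK : Kneading G Y) :
    (cycleGraph fun h : {h : Perm (List X) // h ∈ Y ∧ h ≠ 1} => perm1 h.1).Preconnected :=
  hK.2.2.2.2.2.2.connected.preconnected

theorem subset (hK : Kneading G Y) : Y ⊆ G :=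
  hK.closure_eq ▸ Subgroup.subset_closure

theorem subset_treeAut (hK : Kneading G Y) : Y ⊆ treeAut X :=
  fun _ hg => hK.le_treeAut (hK.subset hg)

theorem secAt_mem (hK : Kneading G Y) {g : Perm (List X)} (hg : g ∈ Y) (w : List X) :
    secAt g w ∈ Y :=
  secAt_mem_of_secAt_singleton_mem hK.subset_treeAut (fun _ => hK.secAt_singleton_mem) hg w

theorem selfSimilarSub (hK : Kneading G Y) : SelfSimilarSub G :=
  hK.closure_eq ▸ selfSimilarSub_closure hK.subset_treeAut fun _ => hK.secAt_singleton_mem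

theorem eq_of_secAt_eq (hK : Kneading G Y) {h : Perm (List X)} (hh : h ∈ Y) {u v : List X}
    (hlen : u.length = v.length) (hne : secAt h u ≠ 1) (heq : secAt h u = secAt h v) :
    u = v := by
  induction u using List.reverseRecOn generalizing v with
  | nil => exact (List.length_eq_zero_iff.mp hlen.symm).symm
  | append_singleton u a ih =>
    obtain rfl | ⟨v, b, rfl⟩ := List.eq_nil_or_concat' v
    · simp at hlen
    have hT := hK.subset_treeAut hh
    rw [secAt_append hT, secAt_append hT] at heq
    rw [secAt_append hT] at hne
    have hparent :=
      (hK.existsUnique_parent (hK.secAt_singleton_mem (hK.secAt_mem hh u) a) hne).unique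
        (y₁ := (secAt h u, a)) (y₂ := (secAt h v, b)) ⟨hK.secAt_mem hh u, rfl⟩
        ⟨hK.secAt_mem hh v, heq.symm⟩
    obtain ⟨hsec, rfl⟩ := Prod.ext_iff.mp hparent
    have hne' : secAt h u ≠ 1 := fun h1 => hne (by rw [h1, secAt_one])
    rw [ih (by simpa using hlen) hne' hsec]

theorem isBoundedAut (hK : Kneading G Y) {h : Perm (List X)} (hh : h ∈ Y) : IsBoundedAut h :=
  ⟨Y.ncard, fun _ _ => Set.ncard_le_ncard_of_injOn (secAt h) (fun w _ => hK.secAt_mem hh w)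
    (fun _ hu _ hv => hK.eq_of_secAt_eq hh (hu.1.trans hv.1.symm) hu.2) hK.finite⟩

theorem isFiniteState (hK : Kneading G Y) {h : Perm (List X)} (hh : h ∈ Y) :
    IsFiniteState h :=
  hK.finite.subset <| Set.range_subset_iff.mpr (hK.secAt_mem hh)

theorem secAt_singleton_mem_secImage [Finite X] (hK : Kneading G Y) {g : Perm (List X)}
    (hg : g ∈ Y) (x : X) : secAt g [x] ∈ secImage G [x] := by
  by_cases hx : secAt g [x] = 1
  · rw [hx]
    exact (secImageSubgroup hK.le_treeAut [x]).one_mem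
  refine secAt_mem_secImage_of_sameCycle hK.le_treeAut (hK.subset hg) fun y hxy hyx => ?_
  by_contra hy
  exact hyx (hK.eq_of_sameCycle hg hxy hx hy).symm

theorem secImageSetoid_rel [Finite X] (hK : Kneading G Y) (x y : X) : secImageSetoid G x y := by
  refine Setoid.rel_of_preconnected_cycleGraph hK.preconnected (fun ⟨g, hg, _⟩ x => ?_) x y
  have hgx := apply_singleton (hK.subset_treeAut hg) x
  exact ⟨⟨g, hK.subset hg, hgx⟩, secImage_eq_of_secAt_mem hK.le_treeAut (hK.subset hg) hgx
    (hK.secAt_singleton_mem_secImage hg x)⟩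

theorem secImage_singleton_eq [Finite X] (hK : Kneading G Y) (x : X) :
    secImage G [x] = G := by
  refine Set.Subset.antisymm (fun _ ⟨g, hg, _, hgx⟩ => hgx ▸ hK.selfSimilarSub g hg [x]) ?_
  have hle : Subgroup.closure Y ≤ secImageSubgroup hK.le_treeAut [x] := by
    refine (Subgroup.closure_le _).mpr fun h hh => ?_
    by_cases h1 : h = 1
    · rw [h1]
      exact Subgroup.one_mem _
    obtain ⟨⟨g, z⟩, ⟨hg, rfl⟩, -⟩ := hK.existsUnique_parent hh h1
    rw [SetLike.mem_coe, mem_secImageSubgroup, (hK.secImageSetoid_rel x z).2]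
    exact hK.secAt_singleton_mem_secImage hg z
  exact fun g hg => hle (hK.closure_eq ▸ hg)

theorem selfReplicating [Finite X] (hK : Kneading G Y) : SelfReplicating G :=
  ⟨hK.selfSimilarSub, fun x y => (hK.secImageSetoid_rel x y).1, hK.secImage_singleton_eq⟩

theorem boundedAutomataGroup [Finite X] (hK : Kneading G Y) : BoundedAutomataGroup G := by
  refine ⟨hK.le_treeAut, (Subgroup.fg_iff G).mpr ⟨Y, hK.closure_eq, hK.finite⟩,
    hK.selfSimilarSub, fun g hg => ⟨?_, ?_⟩⟩
  · have hle : G ≤ boundedTreeAut X := hK.closure_eq ▸ (Subgroup.closure_le _).mpr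
      fun h hh => ⟨hK.subset_treeAut hh, hK.isBoundedAut hh⟩
    exact (hle hg).2
  · have hle : G ≤ finiteStateTreeAut X := hK.closure_eq ▸ (Subgroup.closure_le _).mpr
      fun h hh => ⟨hK.subset_treeAut hh, hK.isFiniteState hh⟩
    exact (hle hg).2

end Kneading

theorem kneading_selfReplicating_boundedAutomataGroup_general
    {X : Type u} [Finite X]
    (G : Subgroup (Equiv.Perm (List X))) (Y : Set (Equiv.Perm (List X)))
    (hK : Kneading G Y) :
    BoundedAutomataGroup G ∧ SelfReplicating G :=
  ⟨hK.boundedAutomataGroup, hK.selfReplicating⟩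

/-- **Every kneading automata group is a self-replicating bounded automata group.** -/
theorem kneading_selfReplicating_boundedAutomataGroup
    {X : Type u} [Finite X] [Nontrivial X]
    (G : Subgroup (Equiv.Perm (List X))) (Y : Set (Equiv.Perm (List X)))
    (hK : Kneading G Y) :
    BoundedAutomataGroup G ∧ SelfReplicating G :=
  kneading_selfReplicating_boundedAutomataGroup_general G Y hK
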